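/- Let E be a real inner product space that is complete, let f : E → ℝ be differentiable with gradient map ∇f Lipschitz with constant δ₁ ≥ 0, let μ ≥ 0 be a real number and N a natural number with δ₁·μ·N ≤ 1. Let x ∈ E and set y = x − (μ·N) • ∇f(x). Then ‖∇f(y)‖² ≤ (δ₁·μ·N − 1)²·‖∇f(x)‖² + 2·‖∇f(y)‖·‖∇f(x)‖. -/
import Mathlib

theorem stmt_6 {E : Type*} [NormedAddCommGroup E] [InnerProductSpace ℝ E] [CompleteSpace E]
    (f : E → ℝ) (hf : Differentiable ℝ f) (δ₁ : ℝ) (hδ₁ : 0 ≤ δ₁)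
    (hLip : ∀ x y : E, ‖gradient f y - gradient f x‖ ≤ δ₁ * ‖y - x‖)
    (μ : ℝ) (hμ : 0 ≤ μ) (N : ℕ) (hstep : δ₁ * μ * N ≤ 1)
    (x : E) (y : E) (hy : y = x - (μ * N) • gradient f x) :
    ‖gradient f y‖ ^ 2 ≤
      (δ₁ * μ * N - 1) ^ 2 * ‖gradient f x‖ ^ 2 + 2 * ‖gradient f y‖ * ‖gradient f x‖ := by
  set a := ‖gradient f y‖
  set b := ‖gradient f x‖
  have hyx : ‖y - x‖ = μ * N * b := by
    rw [hy]
    rw [sub_sub_cancel_left, norm_neg, norm_smul, Real.norm_eq_abs, abs_of_nonneg (by positivity : (0:ℝ) ≤ μ * N)]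
  have hc : ‖gradient f y - gradient f x‖ ≤ δ₁ * (μ * N * b) := by
    have := hLip x y
    rwa [hyx] at this
  have h1 : a - b ≤ δ₁ * (μ * N * b) :=
    le_trans (by simpa [a, b] using norm_sub_norm_le (gradient f y) (gradient f x)) hc
  have h2 : b - a ≤ δ₁ * (μ * N * b) :=
    le_trans (by simpa [a, b, norm_sub_rev (gradient f y)] using norm_sub_norm_le (gradient f x) (gradient f y)) hc
  have ha : 0 ≤ a := norm_nonneg _
  have hb : 0 ≤ b := norm_nonneg _
  nlinarith [sq_nonneg (a - b), sq_nonneg b, mul_nonneg hb (sub_nonneg.2 hstep)]
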